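/- Suppose for every state s and available action a, the KL divergence between the true next-state distribution P(·|s,a) and the next-state distribution P(·|s,â) induced by the surrogate action â (sampled via the composed maps φ̂ and φ) is at most δ²/2. Then for any two policies π* and π** whose induced state-transition kernels differ only through this action substitution, the value gap satisfies v^{π*}(s₀) − v^{π**}(s₀) ≤ γδ R_max/(1−γ)². -/

import Mathlib

/-!
By Pinsker's inequality the KL bound makes every row of the two transition kernels `δ`-close
in `ℓ¹`. One step of the chain increases the `ℓ¹` distance of the state distributions by at most
`δ`, so at time `t` they are `t δ`-close, the discounted state distributions are
`(1 - γ) ∑ₜ γᵗ t δ = γ δ / (1 - γ)`-close, and pairing with `R` costs a further factor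
`Rmax / (1 - γ)`.
-/

open scoped BigOperators

/-- Distribution of the Markov chain at time `t` under kernel `P`. -/
def probAt {S : Type*} [Fintype S] (P : S → S → ℝ) (d0 : S → ℝ) : ℕ → S → ℝ
  | 0 => d0
  | (t + 1) => fun s => ∑ s', probAt P d0 t s' * P s' s

/-- Discounted state distribution. -/
noncomputable def dDisc {S : Type*} [Fintype S] (γ : ℝ) (P : S → S → ℝ)
    (d0 : S → ℝ) (s : S) : ℝ :=
  (1 - γ) * ∑' t : ℕ, γ ^ t * probAt P d0 t s

/-- Expected discounted return. -/
noncomputable def val {S : Type*} [Fintype S] (γ : ℝ) (P : S → S → ℝ)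
    (d0 : S → ℝ) (R : S → ℝ) : ℝ :=
  (1 - γ)⁻¹ * ∑ s, dDisc γ P d0 s * R s

noncomputable def klDiv {S : Type*} [Fintype S] (p q : S → ℝ) : ℝ :=
  ∑ s, p s * Real.log (p s / q s)

open Real Finset

theorem mul_log_sum_div_le {ι : Type*} (T : Finset ι) {p q : ι → ℝ}
    (hp : ∀ i ∈ T, 0 < p i) (hq : ∀ i ∈ T, 0 < q i) :
    (∑ i ∈ T, p i) * log ((∑ i ∈ T, p i) / ∑ i ∈ T, q i)
      ≤ ∑ i ∈ T, p i * log (p i / q i) := by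
  rcases T.eq_empty_or_nonempty with rfl | hT
  · simp
  set Q := ∑ i ∈ T, q i
  have hQ : 0 < Q := sum_pos hq hT
  have jensen := convexOn_mul_log.map_sum_le (t := T) (w := fun i => q i / Q)
    (p := fun i => p i / q i) (fun i hi => (div_pos (hq i hi) hQ).le)
    (by rw [← sum_div, div_self hQ.ne'])
    (fun i hi => Set.mem_Ici.2 (div_pos (hp i hi) (hq i hi)).le)
  have hmean : ∑ i ∈ T, q i / Q * (p i / q i) = (∑ i ∈ T, p i) / Q := by
    rw [sum_div]
    exact sum_congr rfl fun i hi => by field_simp [(hq i hi).ne']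
  have hrhs : ∑ i ∈ T, q i / Q * (p i / q i * log (p i / q i))
      = (∑ i ∈ T, p i * log (p i / q i)) / Q := by
    rw [sum_div]
    exact sum_congr rfl fun i hi => by field_simp [(hq i hi).ne']
  simp only [smul_eq_mul, hmean, hrhs] at jensen
  rwa [div_mul_eq_mul_div, div_le_div_iff_of_pos_right hQ] at jensen

theorem binary_pinsker {a b : ℝ} (hb : 0 < b) (hba : b ≤ a) (ha : a < 1) :
    2 * (a - b) ^ 2 ≤ a * log (a / b) + (1 - a) * log ((1 - a) / (1 - b)) := by
  set F : ℝ → ℝ := fun x => a * (log a - log x) + (1 - a) * (log (1 - a) - log (1 - x))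
    - 2 * (a - x) ^ 2
  have hF : ∀ x ∈ Set.Ioo 0 1, HasDerivAt F ((x - a) * (1 - 2 * x) ^ 2 / (x * (1 - x))) x := by
    intro x ⟨hx0, hx1⟩
    have h := (((hasDerivAt_log hx0.ne').const_sub (log a)).const_mul a).add
      ((((hasDerivAt_id x).const_sub 1).log (by simp; linarith)).const_sub (log (1 - a))
        |>.const_mul (1 - a)) |>.sub (((hasDerivAt_id x).const_sub a).pow 2 |>.const_mul 2)
    refine h.congr_deriv ?_
    simp only [id]
    field_simp [hx0.ne', (sub_pos.2 hx1).ne']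
    ring
  have hanti : AntitoneOn F (Set.Icc b a) := by
    refine antitoneOn_of_hasDerivWithinAt_nonpos (convex_Icc b a)
      (f' := fun x => (x - a) * (1 - 2 * x) ^ 2 / (x * (1 - x)))
      (fun x hx => (hF x ⟨hb.trans_le hx.1, hx.2.trans_lt ha⟩).continuousAt.continuousWithinAt)
      (fun x hx => ?_) (fun x hx => ?_) <;> rw [interior_Icc] at hx
    · exact (hF x ⟨hb.trans hx.1, hx.2.trans ha⟩).hasDerivWithinAt
    · have hx1 : 0 < 1 - x := by linarith [hx.2]
      exact div_nonpos_of_nonpos_of_nonneg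
        (mul_nonpos_of_nonpos_of_nonneg (by linarith [hx.2]) (sq_nonneg _))
        (mul_pos (hb.trans hx.1) hx1).le
  have := hanti ⟨le_rfl, hba⟩ ⟨hba, le_rfl⟩ hba
  simp only [F, sub_self, mul_zero, add_zero] at this
  rw [log_div (hb.trans_le hba).ne' hb.ne', log_div (by linarith) (by linarith)]
  linarith

section Pinsker

variable {S : Type*} [Fintype S] {p q : S → ℝ}

theorem klDiv_nonneg (hp : ∀ s, 0 < p s) (hq : ∀ s, 0 < q s) (hp1 : ∑ s, p s = 1)
    (hq1 : ∑ s, q s = 1) : 0 ≤ klDiv p q := by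
  have := mul_log_sum_div_le univ (fun s _ => hp s) (fun s _ => hq s)
  rwa [hp1, hq1, div_one, log_one, mul_zero] at this

/-- Grouping the states by the sign of `p - q` (the set `A` below) turns the `ℓ¹` distance into
`2 (p(A) - q(A))` and, by the log-sum inequality, can only lower the KL divergence, to that of
the two-point laws `(p(A), 1 - p(A))` and `(q(A), 1 - q(A))`. -/
theorem sq_sum_abs_sub_le_two_mul_klDiv (hp : ∀ s, 0 < p s) (hq : ∀ s, 0 < q s)
    (hp1 : ∑ s, p s = 1) (hq1 : ∑ s, q s = 1) :
    (∑ s, |p s - q s|) ^ 2 ≤ 2 * klDiv p q := by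
  classical
  set A := univ.filter fun s => q s ≤ p s
  set a := ∑ s ∈ A, p s
  set b := ∑ s ∈ A, q s
  have hpc : ∑ s ∈ Aᶜ, p s = 1 - a := by rw [← hp1, ← sum_add_sum_compl A p]; ring
  have hqc : ∑ s ∈ Aᶜ, q s = 1 - b := by rw [← hq1, ← sum_add_sum_compl A q]; ring
  have hL1 : ∑ s, |p s - q s| = 2 * (a - b) := by
    rw [← sum_add_sum_compl A, sum_congr rfl (g := fun s => p s - q s) fun s hs =>
        abs_of_nonneg (sub_nonneg.2 (mem_filter.1 hs).2),
      sum_congr rfl (g := fun s => q s - p s) fun s hs =>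
        abs_of_neg (sub_neg.2 (by simpa [A] using hs)) |>.trans (neg_sub _ _),
      sum_sub_distrib, sum_sub_distrib, hpc, hqc]
    ring
  have hKL : a * log (a / b) + (1 - a) * log ((1 - a) / (1 - b)) ≤ klDiv p q := by
    rw [klDiv, ← sum_add_sum_compl A, ← hpc, ← hqc]
    exact add_le_add (mul_log_sum_div_le A (fun s _ => hp s) (fun s _ => hq s))
      (mul_log_sum_div_le Aᶜ (fun s _ => hp s) (fun s _ => hq s))
  have hba : b ≤ a := sum_le_sum fun s hs => (mem_filter.1 hs).2
  rcases hba.eq_or_lt with hab | hab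
  · rw [hL1, hab, sub_self]
    linarith [klDiv_nonneg hp hq hp1 hq1]
  have hb : 0 < b := by
    have hA : A.Nonempty := nonempty_of_sum_ne_zero
      (sum_nonneg (fun s _ => (hq s).le) |>.trans_lt hab).ne'
    exact sum_pos (fun s _ => hq s) hA
  have ha : a < 1 := by
    have hAc : Aᶜ.Nonempty := nonempty_of_sum_ne_zero (f := q) (by
      linarith [hpc ▸ sum_nonneg (s := Aᶜ) fun s _ => (hp s).le])
    linarith [sum_pos (fun s _ => hp s) hAc]
  nlinarith [binary_pinsker hb hab.le ha]

end Pinsker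

section MarkovChain

variable {S : Type*} [Fintype S]

def IsDistribution (d : S → ℝ) : Prop := (∀ s, 0 ≤ d s) ∧ ∑ s, d s = 1

theorem IsDistribution.le_one {d : S → ℝ} (hd : IsDistribution d) (s : S) : d s ≤ 1 :=
  hd.2 ▸ single_le_sum (fun s _ => hd.1 s) (mem_univ s)

theorem IsDistribution.nonempty {d : S → ℝ} (hd : IsDistribution d) : Nonempty S :=
  univ_nonempty_iff.1 (nonempty_of_sum_ne_zero (hd.2 ▸ one_ne_zero))

theorem IsDistribution.probAt {P : S → S → ℝ} {d0 : S → ℝ} (hP : ∀ s, IsDistribution (P s))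
    (hd0 : IsDistribution d0) (t : ℕ) : IsDistribution (probAt P d0 t) := by
  induction t with
  | zero => exact hd0
  | succ t ih =>
    refine ⟨fun s => sum_nonneg fun s' _ => mul_nonneg (ih.1 s') ((hP s').1 s), ?_⟩
    simp only [_root_.probAt]
    rw [sum_comm]
    simp [← mul_sum, (hP _).2, ih.2]

theorem sum_abs_sum_mul_sub_sum_mul_le {P Q : S → S → ℝ} {μ ν : S → ℝ} {δ : ℝ}
    (hP : ∀ s, IsDistribution (P s)) (hν : IsDistribution ν)
    (hPQ : ∀ s, ∑ s', |P s s' - Q s s'| ≤ δ) :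
    ∑ s, |∑ s', μ s' * P s' s - ∑ s', ν s' * Q s' s| ≤ ∑ s, |μ s - ν s| + δ := by
  have hsplit : ∀ s' s, |μ s' * P s' s - ν s' * Q s' s|
      ≤ |μ s' - ν s'| * P s' s + ν s' * |P s' s - Q s' s| := fun s' s => by
    calc |μ s' * P s' s - ν s' * Q s' s|
        = |(μ s' - ν s') * P s' s + ν s' * (P s' s - Q s' s)| := by ring_nf
      _ ≤ |(μ s' - ν s') * P s' s| + |ν s' * (P s' s - Q s' s)| := abs_add_le _ _
      _ = |μ s' - ν s'| * P s' s + ν s' * |P s' s - Q s' s| := by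
        rw [abs_mul, abs_mul, abs_of_nonneg ((hP s').1 s), abs_of_nonneg (hν.1 s')]
  calc ∑ s, |∑ s', μ s' * P s' s - ∑ s', ν s' * Q s' s|
      ≤ ∑ s, ∑ s', (|μ s' - ν s'| * P s' s + ν s' * |P s' s - Q s' s|) := by
        refine sum_le_sum fun s _ => ?_
        rw [← sum_sub_distrib]
        exact (abs_sum_le_sum_abs _ _).trans (sum_le_sum fun s' _ => hsplit s' s)
    _ = ∑ s', (|μ s' - ν s'| + ν s' * ∑ s, |P s' s - Q s' s|) := by
        rw [sum_comm]
        simp only [sum_add_distrib, ← mul_sum, (hP _).2, mul_one]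
    _ ≤ ∑ s', (|μ s' - ν s'| + ν s' * δ) := by
        gcongr with s'
        · exact hν.1 s'
        · exact hPQ s'
    _ = ∑ s, |μ s - ν s| + δ := by rw [sum_add_distrib, ← sum_mul, hν.2, one_mul]

theorem sum_abs_probAt_sub_le {P Q : S → S → ℝ} {d0 : S → ℝ} {δ : ℝ}
    (hP : ∀ s, IsDistribution (P s)) (hQ : ∀ s, IsDistribution (Q s))
    (hd0 : IsDistribution d0) (hPQ : ∀ s, ∑ s', |P s s' - Q s s'| ≤ δ) (t : ℕ) :
    ∑ s, |probAt P d0 t s - probAt Q d0 t s| ≤ t * δ := by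
  induction t with
  | zero => simp [probAt]
  | succ t ih =>
    calc _ ≤ ∑ s, |probAt P d0 t s - probAt Q d0 t s| + δ :=
          sum_abs_sum_mul_sub_sum_mul_le hP (hd0.probAt hQ t) hPQ
      _ ≤ (t + 1 : ℕ) * δ := by push_cast; linarith

end MarkovChain

section Discounted

variable {S : Type*} [Fintype S] {γ : ℝ}

theorem summable_pow_mul_of_abs_le (hγ0 : 0 ≤ γ) (hγ1 : γ < 1) {f : ℕ → ℝ} {C : ℝ}
    (hf : ∀ t, |f t| ≤ C) : Summable fun t => γ ^ t * f t :=
  ((summable_geometric_of_lt_one hγ0 hγ1).mul_right C).of_norm_bounded fun t => by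
    rw [norm_mul, norm_pow, Real.norm_of_nonneg hγ0, Real.norm_eq_abs]
    exact mul_le_mul_of_nonneg_left (hf t) (pow_nonneg hγ0 t)

theorem summable_pow_mul_probAt (hγ0 : 0 ≤ γ) (hγ1 : γ < 1) {P : S → S → ℝ} {d0 : S → ℝ}
    (hP : ∀ s, IsDistribution (P s)) (hd0 : IsDistribution d0) (s : S) :
    Summable fun t => γ ^ t * probAt P d0 t s :=
  summable_pow_mul_of_abs_le hγ0 hγ1 fun t =>
    abs_le.2 ⟨by linarith [(hd0.probAt hP t).1 s], (hd0.probAt hP t).le_one s⟩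

theorem sum_abs_dDisc_sub_le (hγ0 : 0 ≤ γ) (hγ1 : γ < 1) {P Q : S → S → ℝ} {d0 : S → ℝ}
    {δ : ℝ} (hP : ∀ s, IsDistribution (P s)) (hQ : ∀ s, IsDistribution (Q s))
    (hd0 : IsDistribution d0) (hPQ : ∀ s, ∑ s', |P s s' - Q s s'| ≤ δ) :
    ∑ s, |dDisc γ P d0 s - dDisc γ Q d0 s| ≤ γ * δ / (1 - γ) := by
  set μ := probAt P d0
  set ν := probAt Q d0
  have hμ t := hd0.probAt hP t
  have hν t := hd0.probAt hQ t
  have hdisc : ∀ s, dDisc γ P d0 s - dDisc γ Q d0 s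
      = (1 - γ) * ∑' t, γ ^ t * (μ t s - ν t s) := fun s => by
    rw [dDisc, dDisc, ← mul_sub, ← (summable_pow_mul_probAt hγ0 hγ1 hP hd0 s).tsum_sub
      (summable_pow_mul_probAt hγ0 hγ1 hQ hd0 s)]
    simp only [μ, ν, mul_sub]
  have habs : ∀ s, Summable fun t => γ ^ t * |μ t s - ν t s| := fun s =>
    summable_pow_mul_of_abs_le hγ0 hγ1 (C := 1) fun t => by
      rw [abs_abs, abs_sub_le_iff]
      constructor <;> linarith [(hμ t).1 s, (hν t).1 s, (hμ t).le_one s, (hν t).le_one s]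
  have hnorm : ‖γ‖ < 1 := by rwa [Real.norm_of_nonneg hγ0]
  have hlin : Summable fun t : ℕ => γ ^ t * (t * δ) := by
    simpa only [pow_one, mul_comm, mul_left_comm] using
      (summable_pow_mul_geometric_of_norm_lt_one 1 hnorm).mul_right δ
  have hsum : Summable fun t => γ ^ t * ∑ s, |μ t s - ν t s| := by
    simpa only [mul_sum] using summable_sum fun s _ => habs s
  have h1γ : 0 < 1 - γ := sub_pos.2 hγ1
  calc ∑ s, |dDisc γ P d0 s - dDisc γ Q d0 s|
      = (1 - γ) * ∑ s, |∑' t, γ ^ t * (μ t s - ν t s)| := by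
        simp only [hdisc, abs_mul, abs_of_pos h1γ, ← mul_sum]
    _ ≤ (1 - γ) * ∑ s, ∑' t, γ ^ t * |μ t s - ν t s| := by
        gcongr with s
        simpa only [Real.norm_eq_abs, abs_mul, abs_pow, abs_of_nonneg hγ0] using
          norm_tsum_le_tsum_norm (f := fun t => γ ^ t * (μ t s - ν t s))
            (by simpa only [Real.norm_eq_abs, abs_mul, abs_pow, abs_of_nonneg hγ0] using habs s)
    _ = (1 - γ) * ∑' t, γ ^ t * ∑ s, |μ t s - ν t s| := by
        simp only [(Summable.tsum_finsetSum fun s _ => habs s).symm, mul_sum]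
    _ ≤ (1 - γ) * ∑' t : ℕ, γ ^ t * (t * δ) := by
        gcongr with t
        exact sum_abs_probAt_sub_le hP hQ hd0 hPQ t
    _ = γ * δ / (1 - γ) := by
        simp only [show ∀ t : ℕ, γ ^ t * (t * δ) = δ * (t * γ ^ t) from fun t => by ring,
          tsum_mul_left, tsum_coe_mul_geometric_of_norm_lt_one hnorm]
        field_simp

theorem val_sub_val_le (hγ1 : γ < 1) (P Q : S → S → ℝ) (d0 : S → ℝ) {R : S → ℝ} {Rmax : ℝ}
    (hR : ∀ s, |R s| ≤ Rmax) :
    val γ P d0 R - val γ Q d0 R ≤ (1 - γ)⁻¹ * Rmax * ∑ s, |dDisc γ P d0 s - dDisc γ Q d0 s| := by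
  rw [_root_.val, _root_.val, ← mul_sub, ← sum_sub_distrib, mul_assoc]
  refine mul_le_mul_of_nonneg_left ?_ (inv_nonneg.2 (sub_pos.2 hγ1).le)
  rw [mul_sum]
  gcongr with s
  calc _ = (dDisc γ P d0 s - dDisc γ Q d0 s) * R s := by ring
    _ ≤ |dDisc γ P d0 s - dDisc γ Q d0 s| * |R s| := by rw [← abs_mul]; exact le_abs_self _
    _ ≤ _ := by rw [mul_comm]; gcongr; exact hR s

end Discounted

/-- if for every state `s` and available action `a` the KL
divergence between the true next-state distribution `P(·|s,a)` and the
next-state distribution `P(·|s,â)` under the substituted action `â = σ s a`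
is at most `δ²/2`, then for two policies `π*` and `π**` whose induced kernels
differ only via this action substitution,
`v^{π*}(s₀) - v^{π**}(s₀) ≤ γ δ Rmax / (1-γ)²`. -/
theorem stmt8 {S A : Type*} [Fintype S]
    (γ δ Rmax : ℝ) (hγ0 : 0 ≤ γ) (hγ1 : γ < 1) (hδ : 0 ≤ δ)
    (Pt : S → A → S → ℝ)
    (hPtpos : ∀ s a s', 0 < Pt s a s')
    (hPtsum : ∀ s a, ∑ s', Pt s a s' = 1)
    (R : S → ℝ) (hR : ∀ s, |R s| ≤ Rmax)
    (d0 : S → ℝ) (hd0nonneg : ∀ s, 0 ≤ d0 s) (hd0sum : ∑ s, d0 s = 1)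
    (σ : S → A → A)
    (hKL : ∀ s a, klDiv (Pt s a) (Pt s (σ s a)) ≤ δ ^ 2 / 2)
    (π₁ π₂ : S → A) (hsub : ∀ s, π₂ s = σ s (π₁ s)) :
    val γ (fun s s' => Pt s (π₁ s) s') d0 R
        - val γ (fun s s' => Pt s (π₂ s) s') d0 R
      ≤ γ * δ * Rmax / (1 - γ) ^ 2 := by
  have hd0 : IsDistribution d0 := ⟨hd0nonneg, hd0sum⟩
  have hPt : ∀ (policy : S → A) s, IsDistribution fun s' => Pt s (policy s) s' :=
    fun policy s => ⟨fun s' => (hPtpos s (policy s) s').le, hPtsum s (policy s)⟩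
  obtain ⟨s₀⟩ := hd0.nonempty
  have hRmax : 0 ≤ Rmax := (abs_nonneg _).trans (hR s₀)
  have hrow : ∀ s, ∑ s', |Pt s (π₁ s) s' - Pt s (π₂ s) s'| ≤ δ := fun s => by
    refine (pow_le_pow_iff_left₀ (sum_nonneg fun _ _ => abs_nonneg _) hδ two_ne_zero).1 ?_
    have := sq_sum_abs_sub_le_two_mul_klDiv (hPtpos s (π₁ s)) (hPtpos s (π₂ s))
      (hPtsum s (π₁ s)) (hPtsum s (π₂ s))
    linarith [hsub s ▸ hKL s (π₁ s)]
  have h1γ : 0 < 1 - γ := sub_pos.2 hγ1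
  calc _ ≤ (1 - γ)⁻¹ * Rmax * (γ * δ / (1 - γ)) := by
        grw [val_sub_val_le hγ1 _ _ d0 hR,
          sum_abs_dDisc_sub_le hγ0 hγ1 (hPt π₁) (hPt π₂) hd0 hrow]
    _ = γ * δ * Rmax / (1 - γ) ^ 2 := by
        field_simp
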